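/- For every m ∈ ℕ and z ∈ ℂ, ∫_ℝ B_s(t,z) f_m(t) dt = ψ^s_m(z); i.e., the Segal–Bargmann transform B_s maps the m-th Hermite function f_m to ψ^s_m. -/

import Mathlib

/-!
Substituting `t = α x` with `α² = 2s/(1+s)` turns `B_s(t,z) e^{-t²/2}` into
`e^{-z²/2} e^{-(x-y)²}` with `y = √((1-s)/(2s)) z`, so the transform of `f_m` reduces to the
Gaussian average `∫ e^{-(x-y)²} H_m(αx) dx`. Integrating by parts against `e^{-(x-y)²}` and
using the three-term recurrence of the Hermite polynomials shows that this average equals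
`√π γ^m H_m(αy/γ)` whenever `α² + γ² = 1`. For `γ² = (1-s)/(1+s)` one has `αy/γ = z`, and the
constants combine to those of `ψ^s_m`.
-/

open MeasureTheory Complex

/-- Physicists' Hermite polynomial `H_m`, as an entire function on `ℂ`:
`H_m(z) = (-1)^m e^{z²} (d/dz)^m e^{-z²}`. -/
noncomputable def Hpoly (m : ℕ) (z : ℂ) : ℂ :=
  (-1 : ℂ) ^ m * Complex.exp (z ^ 2) * iteratedDeriv m (fun w => Complex.exp (-w ^ 2)) z

/-- `ψ^s_m(z) = ((1-s)/(π√s))^{1/2} ((1-s)/(1+s))^{m/2} (2^m m!)^{-1/2} e^{-z²/2} H_m(z)`. -/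
noncomputable def psiS (s : ℝ) (m : ℕ) (z : ℂ) : ℂ :=
  (Real.sqrt ((1 - s) / (Real.pi * Real.sqrt s)) : ℂ)
    * (Real.sqrt (((1 - s) / (1 + s)) ^ m) : ℂ)
    * (1 / (Real.sqrt ((2 : ℝ) ^ m * m.factorial) : ℂ))
    * Complex.exp (-z ^ 2 / 2) * Hpoly m z

/-- Hermite functions `f_m(t) = (2^m m! √π)^{-1/2} e^{-t²/2} H_m(t)` on `ℝ`. -/
noncomputable def fHerm (m : ℕ) (t : ℝ) : ℂ :=
  (1 / (Real.sqrt ((2 : ℝ) ^ m * m.factorial * Real.sqrt Real.pi)) : ℂ)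
    * Complex.exp (-(t : ℂ) ^ 2 / 2) * Hpoly m (t : ℂ)

/-- Segal–Bargmann kernel
`B_s(t,z) = ((1-s²)/(2πs√(sπ)))^{1/2} exp(-t²/(2s) - z²/(2s) + (√(1-s²)/s) t z)`. -/
noncomputable def Bker (s : ℝ) (t z : ℂ) : ℂ :=
  (Real.sqrt ((1 - s ^ 2) / (2 * Real.pi * s * Real.sqrt (s * Real.pi))) : ℂ)
    * Complex.exp (-t ^ 2 / (2 * s) - z ^ 2 / (2 * s)
        + ((Real.sqrt (1 - s ^ 2) / s : ℝ) : ℂ) * t * z)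

open Polynomial

noncomputable def physHermite : ℕ → ℂ[X]
  | 0 => 1
  | n + 1 => 2 * X * physHermite n - derivative (physHermite n)

@[simp] lemma physHermite_zero : physHermite 0 = 1 := rfl

lemma physHermite_succ (n : ℕ) :
    physHermite (n + 1) = 2 * X * physHermite n - derivative (physHermite n) := rfl

lemma derivative_physHermite_succ (n : ℕ) :
    derivative (physHermite (n + 1)) = C (2 * (n + 1 : ℂ)) * physHermite n := by
  induction n with
  | zero => simp [physHermite_succ, C_ofNat]
  | succ n ih =>
    rw [physHermite_succ (n + 1), derivative_sub, derivative_mul, ih, derivative_C_mul,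
      physHermite_succ n]
    simp only [derivative_mul, derivative_ofNat, derivative_X, map_mul, map_add, map_one,
      map_natCast, C_ofNat]
    push_cast
    ring

lemma physHermite_succ_succ (n : ℕ) :
    physHermite (n + 2) = 2 * X * physHermite (n + 1) - C (2 * (n + 1 : ℂ)) * physHermite n := by
  rw [physHermite_succ (n + 1), derivative_physHermite_succ]

lemma iteratedDeriv_cexp_neg_sq (m : ℕ) :
    iteratedDeriv m (fun w : ℂ => cexp (-w ^ 2)) =
      fun z => (-1) ^ m * (physHermite m).eval z * cexp (-z ^ 2) := by
  induction m with
  | zero => ext z; simp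
  | succ m ih =>
    ext z
    have hexp : HasDerivAt (fun w : ℂ => cexp (-w ^ 2)) (cexp (-z ^ 2) * -(2 * z)) z := by
      simpa using ((hasDerivAt_pow 2 z).neg).cexp
    rw [iteratedDeriv_succ, ih, ((((physHermite m).hasDerivAt z).const_mul _).fun_mul hexp).deriv,
      physHermite_succ]
    simp only [eval_sub, eval_mul, eval_ofNat, eval_X]
    ring

lemma Hpoly_eq_eval_physHermite (m : ℕ) (z : ℂ) : Hpoly m z = (physHermite m).eval z := by
  rw [Hpoly, iteratedDeriv_cexp_neg_sq]
  have hsign : ((-1 : ℂ) ^ m) ^ 2 = 1 := by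
    rw [← pow_mul, mul_comm, pow_mul, neg_one_sq, one_pow]
  have hexp : cexp (z ^ 2) * cexp (-z ^ 2) = 1 := by rw [← Complex.exp_add]; simp
  linear_combination (physHermite m).eval z * ((-1) ^ m) ^ 2 * hexp + (physHermite m).eval z * hsign

lemma norm_cexp_neg_sq_sub_le (y : ℂ) (x : ℝ) :
    ‖cexp (-((x : ℂ) - y) ^ 2)‖ ≤ Real.exp (‖y‖ ^ 2) * Real.exp (-(1 / 2) * x ^ 2) := by
  rw [Complex.norm_exp, ← Real.exp_add, Real.exp_le_exp, Complex.sq_norm, Complex.normSq_apply]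
  simp only [neg_re, sq, mul_re, sub_re, sub_im, ofReal_re, ofReal_im]
  nlinarith [sq_nonneg (x - 2 * y.re)]

lemma integrable_cexp_neg_sq_sub_mul_eval (y : ℂ) (p : ℂ[X]) :
    Integrable fun x : ℝ => cexp (-((x : ℂ) - y) ^ 2) * p.eval (x : ℂ) := by
  induction p using Polynomial.induction_on' with
  | add p q hp hq => simpa only [eval_add, mul_add] using hp.fun_add hq
  | monomial n a =>
    have hdom : Integrable fun x : ℝ =>
        ‖a‖ * Real.exp (‖y‖ ^ 2) * ‖x ^ (n : ℝ) * Real.exp (-(1 / 2) * x ^ 2)‖ :=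
      (integrable_rpow_mul_exp_neg_mul_sq (by norm_num)
        (neg_one_lt_zero.trans_le n.cast_nonneg)).norm.const_mul _
    refine hdom.mono' (by fun_prop) (ae_of_all _ fun x => ?_)
    rw [eval_monomial, norm_mul, norm_mul, norm_mul, norm_pow, Complex.norm_real,
      Real.rpow_natCast, norm_pow, Real.norm_of_nonneg (Real.exp_pos _).le]
    calc ‖cexp (-((x : ℂ) - y) ^ 2)‖ * (‖a‖ * ‖x‖ ^ n)
        ≤ Real.exp (‖y‖ ^ 2) * Real.exp (-(1 / 2) * x ^ 2) * (‖a‖ * ‖x‖ ^ n) := by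
          gcongr; exact norm_cexp_neg_sq_sub_le y x
      _ = _ := by ring

noncomputable def shiftedGaussianIntegral (y : ℂ) : ℂ[X] →ₗ[ℂ] ℂ where
  toFun p := ∫ x : ℝ, cexp (-((x : ℂ) - y) ^ 2) * p.eval (x : ℂ)
  map_add' p q := by
    simp only [eval_add, mul_add]
    exact integral_add (integrable_cexp_neg_sq_sub_mul_eval y p)
      (integrable_cexp_neg_sq_sub_mul_eval y q)
  map_smul' a p := by
    simp only [eval_smul, smul_eq_mul, RingHom.id_apply, ← integral_const_mul, mul_left_comm]

lemma shiftedGaussianIntegral_apply (y : ℂ) (p : ℂ[X]) :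
    shiftedGaussianIntegral y p = ∫ x : ℝ, cexp (-((x : ℂ) - y) ^ 2) * p.eval (x : ℂ) := rfl

lemma shiftedGaussianIntegral_one (y : ℂ) : shiftedGaussianIntegral y 1 = √Real.pi := by
  have hquad : ∀ x : ℝ, -((x : ℂ) - y) ^ 2 = -1 * (x : ℂ) ^ 2 + 2 * y * x + -y ^ 2 :=
    fun x => by ring
  simp only [shiftedGaussianIntegral_apply, eval_one, mul_one, hquad]
  rw [integral_cexp_quadratic (by norm_num), show -y ^ 2 - (2 * y) ^ 2 / (4 * -1) = 0 by ring,
    Real.sqrt_eq_rpow, Complex.ofReal_cpow Real.pi_pos.le]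
  norm_num

lemma shiftedGaussianIntegral_two_mul_X_mul (y : ℂ) (p : ℂ[X]) :
    shiftedGaussianIntegral y (2 * X * p) =
      2 * y * shiftedGaussianIntegral y p + shiftedGaussianIntegral y (derivative p) := by
  have hderiv : ∀ x : ℝ,
      HasDerivAt (fun t : ℝ => cexp (-((t : ℂ) - y) ^ 2) * p.eval (t : ℂ))
        (cexp (-((x : ℂ) - y) ^ 2) * (derivative p + C (2 * y) * p - 2 * X * p).eval (x : ℂ))
        x := by
    intro x
    have hgauss : HasDerivAt (fun w : ℂ => cexp (-(w - y) ^ 2))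
        (cexp (-((x : ℂ) - y) ^ 2) * -(2 * ((x : ℂ) - y))) x := by
      simpa using (((hasDerivAt_id (x : ℂ)).sub_const y).pow 2).neg.cexp
    convert (hgauss.fun_mul (p.hasDerivAt x)).comp_ofReal using 1
    simp only [eval_sub, eval_add, eval_mul, eval_C, eval_X, eval_ofNat]
    ring
  have hzero := integral_eq_zero_of_hasDerivAt_of_integrable hderiv
    (integrable_cexp_neg_sq_sub_mul_eval y _) (integrable_cexp_neg_sq_sub_mul_eval y p)
  rw [← shiftedGaussianIntegral_apply, map_sub, map_add, C_mul', map_smul, smul_eq_mul] at hzero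
  linear_combination -hzero

lemma shiftedGaussianIntegral_physHermite_succ_comp (y α : ℂ) (n : ℕ) :
    shiftedGaussianIntegral y ((physHermite (n + 1)).comp (C α * X)) =
      2 * α * y * shiftedGaussianIntegral y ((physHermite n).comp (C α * X)) +
        (α ^ 2 - 1) *
          shiftedGaussianIntegral y ((derivative (physHermite n)).comp (C α * X)) := by
  have hcomp : (physHermite (n + 1)).comp (C α * X) =
      α • (2 * X * (physHermite n).comp (C α * X)) -
        (derivative (physHermite n)).comp (C α * X) := by
    rw [physHermite_succ, sub_comp, mul_comp, mul_comp, X_comp, ← C_mul']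
    simp only [ofNat_comp]
    ring
  have hderiv : derivative ((physHermite n).comp (C α * X)) =
      α • (derivative (physHermite n)).comp (C α * X) := by
    rw [derivative_comp, ← C_mul']
    simp
  rw [hcomp, map_sub, map_smul, smul_eq_mul, shiftedGaussianIntegral_two_mul_X_mul, hderiv,
    map_smul, smul_eq_mul]
  ring

theorem shiftedGaussianIntegral_physHermite_comp {α γ : ℂ} (hγ : γ ≠ 0)
    (hαγ : α ^ 2 + γ ^ 2 = 1) (y : ℂ) (m : ℕ) :
    shiftedGaussianIntegral y ((physHermite m).comp (C α * X)) =
      √Real.pi * γ ^ m * (physHermite m).eval (α * y / γ) := by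
  have hu : γ * (α * y / γ) = α * y := mul_div_cancel₀ _ hγ
  induction m using Nat.twoStepInduction with
  | zero => simp [shiftedGaussianIntegral_one]
  | one =>
    rw [shiftedGaussianIntegral_physHermite_succ_comp, physHermite_succ, physHermite_zero]
    simp only [one_comp, derivative_one, zero_comp, map_zero, shiftedGaussianIntegral_one, eval_sub,
      eval_mul, eval_ofNat, eval_X, eval_one, eval_zero]
    linear_combination (-2 * √Real.pi : ℂ) * hu
  | more n ih₀ ih₁ =>
    rw [shiftedGaussianIntegral_physHermite_succ_comp, derivative_physHermite_succ, mul_comp,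
      C_comp, C_mul' (2 * (n + 1 : ℂ)), map_smul, smul_eq_mul, ih₀, ih₁,
      physHermite_succ_succ]
    simp only [eval_sub, eval_mul, eval_C, eval_X, eval_ofNat]
    linear_combination
      (-2 * √Real.pi * γ ^ (n + 1) * (physHermite (n + 1)).eval (α * y / γ)) * hu
      + (2 * (n + 1) * √Real.pi * γ ^ n * (physHermite n).eval (α * y / γ)) * hαγ

lemma sq_sqrt_two_mul_div_add_sq_sqrt_one_sub_div {s : ℝ} (hs0 : 0 < s) (hs1 : s < 1) :
    √(2 * s / (1 + s)) ^ 2 + √((1 - s) / (1 + s)) ^ 2 = 1 := by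
  rw [Real.sq_sqrt (by positivity), Real.sq_sqrt (div_nonneg (by linarith) (by positivity))]
  field_simp
  ring

lemma sqrt_two_mul_div_mul_sqrt_one_sub_div {s : ℝ} (hs0 : 0 < s) :
    √(2 * s / (1 + s)) * √((1 - s) / (2 * s)) = √((1 - s) / (1 + s)) := by
  rw [← Real.sqrt_mul (by positivity)]
  congr 1
  field_simp

lemma Bker_mul_fHerm_sqrt_mul {s : ℝ} (hs0 : 0 < s) (hs1 : s < 1) (m : ℕ) (z : ℂ) (x : ℝ) :
    Bker s ↑(√(2 * s / (1 + s)) * x) z * fHerm m (√(2 * s / (1 + s)) * x) =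
      √((1 - s ^ 2) / (2 * Real.pi * s * √(s * Real.pi))) *
        (1 / √(2 ^ m * m.factorial * √Real.pi) : ℂ) * cexp (-z ^ 2 / 2) *
        (cexp (-((x : ℂ) - √((1 - s) / (2 * s)) * z) ^ 2) *
          ((physHermite m).comp (C (√(2 * s / (1 + s)) : ℂ) * X)).eval (x : ℂ)) := by
  have haβ : √(1 - s ^ 2) * √(2 * s / (1 + s)) = 2 * s * √((1 - s) / (2 * s)) := by
    have h2s : 2 * s * √((1 - s) / (2 * s)) = √((2 * s) ^ 2 * ((1 - s) / (2 * s))) := by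
      rw [Real.sqrt_mul (sq_nonneg _), Real.sqrt_sq (by positivity)]
    rw [h2s, ← Real.sqrt_mul (by nlinarith)]
    congr 1
    field_simp
    ring
  set a := √(2 * s / (1 + s))
  set β := √((1 - s) / (2 * s))
  have ha : a ^ 2 * (1 + s) = 2 * s := by
    rw [Real.sq_sqrt (by positivity), div_mul_cancel₀ _ (by positivity)]
  have hβ : β ^ 2 * (2 * s) = 1 - s := by
    rw [Real.sq_sqrt (div_nonneg (by linarith) (by positivity)),
      div_mul_cancel₀ _ (by positivity)]
  have hs : (s : ℂ) ≠ 0 := ofReal_ne_zero.2 hs0.ne'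
  have hexponent : -((a * x : ℝ) : ℂ) ^ 2 / (2 * s) - z ^ 2 / (2 * s) +
      ((√(1 - s ^ 2) / s : ℝ) : ℂ) * (a * x : ℝ) * z + -((a * x : ℝ) : ℂ) ^ 2 / 2 =
      -((x : ℂ) - β * z) ^ 2 + -z ^ 2 / 2 := by
    have ha' : (a : ℂ) ^ 2 * (1 + s) = 2 * s := by exact_mod_cast ha
    have hβ' : (β : ℂ) ^ 2 * (2 * s) = 1 - s := by exact_mod_cast hβ
    have haβ' : (√(1 - s ^ 2) : ℂ) * a = 2 * s * β := by exact_mod_cast haβ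
    push_cast
    field_simp
    linear_combination (-(x : ℂ) ^ 2) * ha' + (2 * x * z) * haβ' + z ^ 2 * hβ'
  have hexp : Complex.exp (-((a * x : ℝ) : ℂ) ^ 2 / (2 * s) - z ^ 2 / (2 * s) +
      ((√(1 - s ^ 2) / s : ℝ) : ℂ) * (a * x : ℝ) * z) *
        cexp (-((a * x : ℝ) : ℂ) ^ 2 / 2) =
      cexp (-((x : ℂ) - β * z) ^ 2) * cexp (-z ^ 2 / 2) := by
    rw [← Complex.exp_add, ← Complex.exp_add, hexponent]
  simp only [Bker, fHerm, Hpoly_eq_eval_physHermite, eval_comp, eval_mul, eval_C, eval_X]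
  rw [← ofReal_mul a x]
  linear_combination (√((1 - s ^ 2) / (2 * Real.pi * s * √(s * Real.pi))) *
    (1 / √(2 ^ m * m.factorial * √Real.pi) : ℂ) *
    (physHermite m).eval ((a * x : ℝ) : ℂ)) * hexp

lemma Bker_fHerm_prefactor_eq_psiS_prefactor {s : ℝ} (hs0 : 0 < s) (hs1 : s < 1) (m : ℕ) :
    √(2 * s / (1 + s)) * √((1 - s ^ 2) / (2 * Real.pi * s * √(s * Real.pi))) *
        (1 / √(2 ^ m * m.factorial * √Real.pi)) * √Real.pi * √((1 - s) / (1 + s)) ^ m =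
      √((1 - s) / (Real.pi * √s)) * √(((1 - s) / (1 + s)) ^ m) *
        (1 / √(2 ^ m * m.factorial)) := by
  have hpow : √(((1 - s) / (1 + s)) ^ m) = √((1 - s) / (1 + s)) ^ m := by
    rw [Real.sqrt_eq_iff_eq_sq (by positivity) (by positivity), ← pow_mul, mul_comm, pow_mul,
      Real.sq_sqrt (div_nonneg (by linarith) (by positivity))]
  have hsplit :
      √(2 ^ m * m.factorial * √Real.pi) = √(2 ^ m * m.factorial) * √(√Real.pi) :=
    Real.sqrt_mul (by positivity) _
  have hgauss : √(2 * s / (1 + s)) * √((1 - s ^ 2) / (2 * Real.pi * s * √(s * Real.pi))) *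
      √Real.pi = √((1 - s) / (Real.pi * √s)) * √(√Real.pi) := by
    rw [← Real.sqrt_mul (by positivity),
      ← Real.sqrt_mul (mul_nonneg (by positivity) (div_nonneg (by nlinarith) (by positivity))),
      ← Real.sqrt_mul (div_nonneg (by linarith) (by positivity)), Real.sqrt_mul hs0.le]
    congr 1
    have hpi : √Real.pi ^ 2 = Real.pi := Real.sq_sqrt Real.pi_pos.le
    field_simp
    rw [hpi]
    ring
  calc _ = √(2 * s / (1 + s)) * √((1 - s ^ 2) / (2 * Real.pi * s * √(s * Real.pi))) *
        √Real.pi * √((1 - s) / (1 + s)) ^ m / (√(2 ^ m * m.factorial) * √(√Real.pi)) := by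
        rw [hsplit]; ring
    _ = _ := by
        rw [hgauss, hpow]
        field_simp

/-- The Segal–Bargmann transform maps the Hermite function `f_m` to `ψ^s_m`. -/
theorem statement8 (s : ℝ) (hs0 : 0 < s) (hs1 : s < 1) (m : ℕ) (z : ℂ) :
    ∫ t : ℝ, Bker s (t : ℂ) z * fHerm m t = psiS s m z := by
  have hαγ := sq_sqrt_two_mul_div_add_sq_sqrt_one_sub_div hs0 hs1
  have hαβ := sqrt_two_mul_div_mul_sqrt_one_sub_div hs0
  have hpointwise := Bker_mul_fHerm_sqrt_mul hs0 hs1 m z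
  set α := √(2 * s / (1 + s))
  set β := √((1 - s) / (2 * s))
  set γ := √((1 - s) / (1 + s))
  have hα : 0 < α := Real.sqrt_pos.2 (by positivity)
  have hγ : (γ : ℂ) ≠ 0 :=
    ofReal_ne_zero.2 (Real.sqrt_pos.2 (div_pos (by linarith) (by linarith))).ne'
  have hz : (α : ℂ) * (β * z) / γ = z := by
    rw [← mul_assoc, ← ofReal_mul, hαβ, mul_div_cancel_left₀ _ hγ]
  calc ∫ t : ℝ, Bker s t z * fHerm m t
      = α • ∫ x : ℝ, Bker s ↑(α * x) z * fHerm m (α * x) := by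
        rw [Measure.integral_comp_mul_left (fun t => Bker s t z * fHerm m t), smul_smul,
          abs_of_pos (inv_pos.2 hα), mul_inv_cancel₀ hα.ne', one_smul]
    _ = α • (√((1 - s ^ 2) / (2 * Real.pi * s * √(s * Real.pi))) *
          (1 / √(2 ^ m * m.factorial * √Real.pi) : ℂ) * cexp (-z ^ 2 / 2) *
          shiftedGaussianIntegral (β * z) ((physHermite m).comp (C (α : ℂ) * X))) := by
        simp_rw [hpointwise, integral_const_mul]
        rfl
    _ = psiS s m z := by
        rw [shiftedGaussianIntegral_physHermite_comp hγ (by exact_mod_cast hαγ), hz, psiS,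
          Hpoly_eq_eval_physHermite, real_smul]
        have hconst := congrArg ofReal (Bker_fHerm_prefactor_eq_psiS_prefactor hs0 hs1 m)
        push_cast at hconst
        linear_combination (cexp (-z ^ 2 / 2) * (physHermite m).eval z) * hconst
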